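/- Let G = ⟨a, b | a^{b²} = a·a^{3b}⟩. The normal closure of a in G is the subgroup generated by a and a^b = b⁻¹ab, and it is a free group freely generated by {a, a^b}: the homomorphism from the free group on two generators x, y to G sending x ↦ a and y ↦ b⁻¹ab is injective, and its image is the normal closure of a. -/
import Mathlib


namespace OneRelatorLCS

/-- The relator `(b⁻²ab²)⁻¹ · a · (b⁻¹a³b)` in the free group on `a = of 0`, `b = of 1`,
expressing the relation `a^{b²} = a·a^{3b}` (with `x^y = y⁻¹xy`). -/
def rel : FreeGroup (Fin 2) :=
  ((FreeGroup.of 1)⁻¹ * (FreeGroup.of 1)⁻¹ * FreeGroup.of 0 * FreeGroup.of 1 * FreeGroup.of 1)⁻¹ *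
    FreeGroup.of 0 *
    ((FreeGroup.of 1)⁻¹ * (FreeGroup.of 0) ^ 3 * FreeGroup.of 1)

/-- The one-relator group `G = ⟨a, b | a^{b²} = a·a^{3b}⟩`. -/
abbrev G : Type := PresentedGroup ({rel} : Set (FreeGroup (Fin 2)))

def a : G := PresentedGroup.of 0
def b : G := PresentedGroup.of 1

/-- The homomorphism from the free group on two generators `x = of 0`, `y = of 1`
to `G` sending `x ↦ a`, `y ↦ a^b = b⁻¹ab`. -/
def f : FreeGroup (Fin 2) →* G :=
  FreeGroup.lift fun i => if i = 0 then a else b⁻¹ * a * b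

/-! ### Auxiliary constructions: `G ≅ F₂ ⋊ ℤ` -/

/-- The endomorphism `x ↦ y x⁻³, y ↦ x` of the free group. -/
def e₁ : FreeGroup (Fin 2) →* FreeGroup (Fin 2) :=
  FreeGroup.lift fun i => if i = 0 then
    FreeGroup.of 1 * (FreeGroup.of 0)⁻¹ * (FreeGroup.of 0)⁻¹ * (FreeGroup.of 0)⁻¹
  else FreeGroup.of 0

/-- The endomorphism `x ↦ y, y ↦ x y³` of the free group. -/
def e₂ : FreeGroup (Fin 2) →* FreeGroup (Fin 2) :=
  FreeGroup.lift fun i => if i = 0 then FreeGroup.of 1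
  else FreeGroup.of 0 * FreeGroup.of 1 * FreeGroup.of 1 * FreeGroup.of 1

/-- The automorphism of the free group given by `e₁`, with inverse `e₂`. -/
def A : MulAut (FreeGroup (Fin 2)) :=
  MonoidHom.toMulEquiv e₁ e₂
    (by
      apply FreeGroup.ext_hom
      intro i
      fin_cases i <;> simp [e₁, e₂])
    (by
      apply FreeGroup.ext_hom
      intro i
      fin_cases i <;> simp [e₁, e₂])

/-- The `ℤ`-action on the free group generated by `A`. -/
def φ : Multiplicative ℤ →* MulAut (FreeGroup (Fin 2)) :=
  zpowersHom _ A

/-- The semidirect product `F₂ ⋊ ℤ`. -/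
abbrev H : Type := SemidirectProduct (FreeGroup (Fin 2)) (Multiplicative ℤ) φ

open SemidirectProduct in
lemma conj_inl (w : FreeGroup (Fin 2)) :
    (inr (Multiplicative.ofAdd (1 : ℤ)) : H)⁻¹ * inl w *
      inr (Multiplicative.ofAdd (1 : ℤ)) = inl (e₂ w) := by
  have hφ : φ (Multiplicative.ofAdd (1 : ℤ)) = A := by simp [φ]
  calc (inr (Multiplicative.ofAdd (1 : ℤ)) : H)⁻¹ * inl w * inr (Multiplicative.ofAdd (1 : ℤ))
      = inr (Multiplicative.ofAdd (1 : ℤ))⁻¹ * inl w * inr (Multiplicative.ofAdd (1 : ℤ)) := by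
        rw [map_inv]
    _ = inl ((φ (Multiplicative.ofAdd (1 : ℤ)))⁻¹ w) :=
        (SemidirectProduct.inl_aut_inv _ _).symm
    _ = inl (A⁻¹ w) := by rw [hφ]
    _ = inl (e₂ w) := rfl

/-- The generator images for the homomorphism `G →* H`. -/
def gmap : Fin 2 → H := fun i =>
  if i = 0 then SemidirectProduct.inl (FreeGroup.of 0)
  else SemidirectProduct.inr (Multiplicative.ofAdd (1 : ℤ))

open SemidirectProduct in
lemma gmap_rel : ∀ r ∈ ({rel} : Set (FreeGroup (Fin 2))), FreeGroup.lift gmap r = 1 := by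
  intro r hr
  rw [Set.mem_singleton_iff] at hr
  subst hr
  have h0 : FreeGroup.lift gmap (FreeGroup.of (0 : Fin 2)) = inl (FreeGroup.of 0) := by
    simp [gmap]
  have h1 : FreeGroup.lift gmap (FreeGroup.of (1 : Fin 2)) =
      inr (Multiplicative.ofAdd (1 : ℤ)) := by
    simp [gmap]
  set B : H := inr (Multiplicative.ofAdd (1 : ℤ)) with hB
  set X : H := inl (FreeGroup.of 0) with hX
  have key : FreeGroup.lift gmap rel = (B⁻¹ * B⁻¹ * X * B * B)⁻¹ * X * (B⁻¹ * X ^ 3 * B) := by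
    simp only [rel, map_mul, map_inv, map_pow, h0, h1]
  rw [key]
  have c1 : B⁻¹ * X * B = inl (FreeGroup.of 1) := by
    rw [hX, hB, conj_inl]
    congr 1
  have c2 : B⁻¹ * B⁻¹ * X * B * B = inl (FreeGroup.of 0 * FreeGroup.of 1 * FreeGroup.of 1 *
      FreeGroup.of 1) := by
    have : B⁻¹ * B⁻¹ * X * B * B = B⁻¹ * (B⁻¹ * X * B) * B := by group
    rw [this, c1, hB, conj_inl]
    congr 1
  have c3 : B⁻¹ * X ^ 3 * B = inl ((FreeGroup.of 1) ^ 3) := by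
    have hX3 : X ^ 3 = inl ((FreeGroup.of (0 : Fin 2)) ^ 3) := by rw [hX, map_pow]
    rw [hX3, hB, conj_inl]
    congr 1
  rw [c2, c3, hX]
  rw [← map_inv, ← map_mul, ← map_mul]
  rw [show (FreeGroup.of (0 : Fin 2) * FreeGroup.of 1 * FreeGroup.of 1 * FreeGroup.of 1)⁻¹ *
      FreeGroup.of 0 * (FreeGroup.of 1) ^ 3 = 1 from by group]
  exact map_one _

/-- The homomorphism `ψ : G →* H`. -/
def ψ : G →* H := PresentedGroup.toGroup gmap_rel

lemma ψ_a : ψ a = SemidirectProduct.inl (FreeGroup.of 0) := by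
  show ψ (PresentedGroup.of 0) = _
  rw [ψ, PresentedGroup.toGroup.of]
  simp [gmap]

lemma ψ_b : ψ b = SemidirectProduct.inr (Multiplicative.ofAdd (1 : ℤ)) := by
  show ψ (PresentedGroup.of 1) = _
  rw [ψ, PresentedGroup.toGroup.of]
  simp [gmap]

lemma ψ_comp_f : ψ.comp f = SemidirectProduct.inl := by
  apply FreeGroup.ext_hom
  intro i
  fin_cases i
  · show ψ (f (FreeGroup.of 0)) = _
    have : f (FreeGroup.of (0 : Fin 2)) = a := by simp [f]
    rw [this, ψ_a]
    rfl
  · show ψ (f (FreeGroup.of 1)) = _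
    have : f (FreeGroup.of (1 : Fin 2)) = b⁻¹ * a * b := by simp [f]
    rw [this, map_mul, map_mul, map_inv, ψ_a, ψ_b, conj_inl]
    congr 1

lemma f_injective : Function.Injective f := by
  have h : Function.Injective (⇑ψ ∘ ⇑f) := by
    rw [show ⇑ψ ∘ ⇑f = ⇑(ψ.comp f) from rfl, ψ_comp_f]
    exact SemidirectProduct.inl_injective
  exact h.of_comp

/-! ### Relations in `G` -/

lemma relG : (b⁻¹ * b⁻¹ * a * b * b)⁻¹ * a * (b⁻¹ * a ^ 3 * b) = 1 := by
  have h : (PresentedGroup.mk ({rel} : Set (FreeGroup (Fin 2))) rel : G) = 1 :=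
    (QuotientGroup.eq_one_iff rel).mpr
      (Subgroup.subset_normalClosure (Set.mem_singleton rel))
  have ha : (PresentedGroup.mk ({rel} : Set (FreeGroup (Fin 2)))) (FreeGroup.of 0) = a := rfl
  have hb : (PresentedGroup.mk ({rel} : Set (FreeGroup (Fin 2)))) (FreeGroup.of 1) = b := rfl
  rw [rel] at h
  simp only [map_mul, map_inv, map_pow, ha, hb] at h
  exact h

lemma keyrel : b⁻¹ * b⁻¹ * a * b * b = a * (b⁻¹ * a ^ 3 * b) := by
  refine inv_mul_eq_one.mp ?_
  calc (b⁻¹ * b⁻¹ * a * b * b)⁻¹ * (a * (b⁻¹ * a ^ 3 * b))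
      = (b⁻¹ * b⁻¹ * a * b * b)⁻¹ * a * (b⁻¹ * a ^ 3 * b) := by group
    _ = 1 := relG

lemma conj_c : b⁻¹ * (b⁻¹ * a * b) * b = a * (b⁻¹ * a * b) ^ 3 := by
  calc b⁻¹ * (b⁻¹ * a * b) * b = b⁻¹ * b⁻¹ * a * b * b := by group
    _ = a * (b⁻¹ * a ^ 3 * b) := keyrel
    _ = a * (b⁻¹ * a * b) ^ 3 := by
        rw [show (3 : ℕ) = 2 + 1 from rfl, pow_succ, pow_succ, pow_one, pow_succ, pow_succ,
          pow_one]
        group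

lemma conj_a : b * a * b⁻¹ = (b⁻¹ * a * b) * (a ^ 3)⁻¹ := by
  have h5 : b⁻¹ * a * b = (b * a * b⁻¹) * a ^ 3 := by
    calc b⁻¹ * a * b = b * (b⁻¹ * b⁻¹ * a * b * b) * b⁻¹ := by group
      _ = b * (a * (b⁻¹ * a ^ 3 * b)) * b⁻¹ := by rw [keyrel]
      _ = (b * a * b⁻¹) * a ^ 3 := by group
  rw [h5]
  group

/-! ### The subgroup `K = ⟨a, b⁻¹ab⟩` -/

lemma haK : a ∈ Subgroup.closure ({a, b⁻¹ * a * b} : Set G) :=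
  Subgroup.subset_closure (Set.mem_insert _ _)

lemma hcK : b⁻¹ * a * b ∈ Subgroup.closure ({a, b⁻¹ * a * b} : Set G) :=
  Subgroup.subset_closure (Set.mem_insert_of_mem _ rfl)

lemma K_conj : ∀ g ∈ Subgroup.closure ({a, b⁻¹ * a * b} : Set G),
    b * g * b⁻¹ ∈ Subgroup.closure ({a, b⁻¹ * a * b} : Set G) := by
  intro g hg
  induction hg using Subgroup.closure_induction with
  | mem x hx =>
    rcases hx with rfl | rfl
    · rw [conj_a]
      exact mul_mem hcK (inv_mem (pow_mem haK 3))
    · rw [show b * (b⁻¹ * a * b) * b⁻¹ = a from by group]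
      exact haK
  | one => rw [mul_one, mul_inv_cancel]; exact one_mem _
  | mul x y hx hy px py =>
    rw [show b * (x * y) * b⁻¹ = (b * x * b⁻¹) * (b * y * b⁻¹) from by group]
    exact mul_mem px py
  | inv x hx px =>
    rw [show b * x⁻¹ * b⁻¹ = (b * x * b⁻¹)⁻¹ from by group]
    exact inv_mem px

lemma K_conj' : ∀ g ∈ Subgroup.closure ({a, b⁻¹ * a * b} : Set G),
    b⁻¹ * g * b ∈ Subgroup.closure ({a, b⁻¹ * a * b} : Set G) := by
  intro g hg
  induction hg using Subgroup.closure_induction with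
  | mem x hx =>
    rcases hx with rfl | rfl
    · exact hcK
    · rw [conj_c]
      exact mul_mem haK (pow_mem hcK 3)
  | one => rw [mul_one, inv_mul_cancel]; exact one_mem _
  | mul x y hx hy px py =>
    rw [show b⁻¹ * (x * y) * b = (b⁻¹ * x * b) * (b⁻¹ * y * b) from by group]
    exact mul_mem px py
  | inv x hx px =>
    rw [show b⁻¹ * x⁻¹ * b = (b⁻¹ * x * b)⁻¹ from by group]
    exact inv_mem px

lemma K_normal : (Subgroup.closure ({a, b⁻¹ * a * b} : Set G)).Normal := by
  rw [← Subgroup.normalizer_eq_top_iff]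
  rw [eq_top_iff, ← PresentedGroup.closure_range_of ({rel} : Set (FreeGroup (Fin 2))),
    Subgroup.closure_le]
  rintro x ⟨i, rfl⟩
  fin_cases i
  · exact Subgroup.le_normalizer haK
  · show (b : G) ∈ _
    rw [SetLike.mem_coe, Subgroup.mem_normalizer_iff]
    intro h
    constructor
    · exact K_conj h
    · intro hb
      have := K_conj' _ hb
      rwa [show b⁻¹ * (b * h * b⁻¹) * b = h from by group] at this

lemma range_f : f.range = Subgroup.closure ({a, b⁻¹ * a * b} : Set G) := by
  rw [f, FreeGroup.range_lift_eq_closure]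
  congr 1
  ext g
  constructor
  · rintro ⟨i, rfl⟩
    fin_cases i
    · simp
    · simp
  · rintro (rfl | rfl)
    · exact ⟨0, by simp⟩
    · exact ⟨1, by simp⟩

lemma nc_eq_K : Subgroup.normalClosure {a} = Subgroup.closure ({a, b⁻¹ * a * b} : Set G) := by
  haveI := K_normal
  apply le_antisymm
  · exact Subgroup.normalClosure_le_normal (Set.singleton_subset_iff.mpr haK)
  · rw [Subgroup.closure_le]
    rintro x (rfl | rfl)
    · exact Subgroup.subset_normalClosure rfl
    · have := Subgroup.Normal.conj_mem (inferInstance : (Subgroup.normalClosure {a}).Normal) a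
        (Subgroup.subset_normalClosure rfl) b⁻¹
      rwa [inv_inv] at this

/-- In `G = ⟨a, b | a^{b²} = a·a^{3b}⟩`, the normal closure of `a` is the
subgroup generated by `a` and `a^b = b⁻¹ab`, and it is a free group freely
generated by `{a, a^b}`: the homomorphism `f` from the free group on two
generators, `x ↦ a`, `y ↦ b⁻¹ab`, is injective with image the normal closure
of `a`. -/
theorem normalClosure_a_free :
    Function.Injective f ∧
      f.range = Subgroup.normalClosure {a} ∧
      Subgroup.normalClosure {a} = Subgroup.closure {a, b⁻¹ * a * b} := by
  refine ⟨f_injective, ?_, nc_eq_K⟩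
  rw [range_f, nc_eq_K]

end OneRelatorLCS
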